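/- arXiv:1711.09036 — 2 statements merged into one kernel-verified Lean document; each statement's English description precedes it below -/
import Mathlib

section
/- Let μ satisfy (aa), λ > 0, T > 0, and let f : [0,T] → ℝ be absolutely continuous with f(0) = 0 and f′ ∈ L^∞(κ, T) for every κ ∈ (0, T). If (k * f′)(t) + λ f(t) ≤ 0 for all t ∈ (0, T], then f(t) ≤ 0 for all t ∈ [0, T]. -/
open MeasureTheory Set Real

/-- The kernel `k(t) = ∫₀¹ t^{-α} μ(α)/Γ(1-α) dα`. -/
noncomputable def kker (μ : ℝ → ℝ) (t : ℝ) : ℝ :=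
  ∫ α in Ioo (0:ℝ) 1, t ^ (-α) * μ α / Real.Gamma (1 - α)

lemma rpow_neg_anti {x y α : ℝ} (hx : 0 < x) (hxy : x ≤ y) (hα : 0 ≤ α) :
    y ^ (-α) ≤ x ^ (-α) := by
  rw [Real.rpow_neg hx.le, Real.rpow_neg (hx.trans_le hxy).le]
  exact inv_anti₀ (Real.rpow_pos_of_pos hx α) (Real.rpow_le_rpow hx.le hxy hα)

lemma rpow_neg_le_max {x α : ℝ} (hx : 0 < x) (h0 : 0 ≤ α) (h1 : α ≤ 1) :
    x ^ (-α) ≤ max 1 x⁻¹ := by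
  rcases le_or_gt 1 x with h | h
  · exact le_max_of_le_left (Real.rpow_le_one_of_one_le_of_nonpos h (by linarith))
  · refine le_max_of_le_right ?_
    rw [Real.rpow_neg hx.le]
    apply inv_anti₀ hx
    calc x = x ^ (1:ℝ) := (Real.rpow_one x).symm
    _ ≤ x ^ α := Real.rpow_le_rpow_of_exponent_ge hx h.le h1

lemma rpow_le_max {x p : ℝ} (hx : 0 < x) (h0 : 0 ≤ p) (h1 : p ≤ 1) :
    x ^ p ≤ max 1 x := by
  rcases le_or_gt 1 x with h | h
  · refine le_max_of_le_right ?_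
    calc x ^ p ≤ x ^ (1:ℝ) := Real.rpow_le_rpow_of_exponent_le h h1
    _ = x := Real.rpow_one x
  · exact le_max_of_le_left (Real.rpow_le_one hx.le h.le h0)

lemma gamma_lb : ∃ c : ℝ, 0 < c ∧ ∀ x ∈ Icc (1:ℝ) 2, c ≤ Real.Gamma x := by
  have hc : ContinuousOn Real.Gamma (Icc (1:ℝ) 2) := by
    intro x hx
    have hx0 : (0:ℝ) < x := lt_of_lt_of_le one_pos hx.1
    have : DifferentiableAt ℝ Real.Gamma x := by
      apply Real.differentiableAt_Gamma
      intro m h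
      have : -(m:ℝ) ≤ 0 := by simp [Nat.cast_nonneg]
      linarith [h ▸ hx0]
    exact this.continuousAt.continuousWithinAt
  obtain ⟨x₀, hx₀, hmin⟩ := isCompact_Icc.exists_isMinOn (nonempty_Icc.mpr (by norm_num)) hc
  exact ⟨Real.Gamma x₀, Real.Gamma_pos_of_pos (lt_of_lt_of_le one_pos hx₀.1), fun x hx => hmin hx⟩

lemma ftc_ker {t₀ α : ℝ} {u v : ℝ} (huv : u ≤ v) (hv : v < t₀) :
    ∫ s in Ioc u v, α * (t₀ - s) ^ (-α - 1) = (t₀ - v) ^ (-α) - (t₀ - u) ^ (-α) := by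
  rw [← intervalIntegral.integral_of_le huv]
  apply intervalIntegral.integral_eq_sub_of_hasDerivAt
  · intro s hs
    rw [uIcc_of_le huv] at hs
    have hs' : 0 < t₀ - s := by have := hs.2; linarith
    have h1 : HasDerivAt (fun s : ℝ => t₀ - s) (-1) s := (hasDerivAt_id s).const_sub t₀
    have h2 : HasDerivAt (fun x : ℝ => x ^ (-α)) ((-α) * (t₀ - s) ^ (-α - 1)) (t₀ - s) :=
      Real.hasDerivAt_rpow_const (Or.inl hs'.ne')
    have h3 := h2.comp s h1
    simp only [Function.comp_def] at h3
    convert h3 using 1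
    · rfl
    ring
  · apply ContinuousOn.intervalIntegrable
    apply continuousOn_const.mul
    apply ContinuousOn.rpow_const (continuousOn_const.sub continuousOn_id)
    intro s hs
    rw [uIcc_of_le huv] at hs
    left; intro h; have h : t₀ - s = 0 := h; have := hs.2; linarith [sub_eq_zero.mp h]

/-- Interval integrability of the kernel up to its singularity. -/
lemma ker_II {t₀ α b : ℝ} (hα1 : α < 1) (hb : b ≤ t₀) :
    IntervalIntegrable (fun τ => (t₀ - τ) ^ (-α)) volume b t₀ := by
  have h := (intervalIntegral.intervalIntegrable_rpow' (a := 0) (b := t₀ - b)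
    (show (-1:ℝ) < -α by linarith))
  have h2 := h.comp_sub_left t₀
  have e1 : t₀ - 0 = t₀ := by ring
  have e2 : t₀ - (t₀ - b) = b := by ring
  rw [e1, e2] at h2
  exact h2.symm

/-- Value of the kernel integral near the singularity. -/
lemma ker_integral {t₀ α b : ℝ} (hα0 : 0 < α) (hα1 : α < 1) (hb : b < t₀) :
    ∫ τ in Ioo b t₀, (t₀ - τ) ^ (-α) = (t₀ - b) ^ (1 - α) / (1 - α) := by
  rw [← integral_Ioc_eq_integral_Ioo, ← intervalIntegral.integral_of_le hb.le]
  rw [intervalIntegral.integral_comp_sub_left (fun x => x ^ (-α)) t₀]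
  have e1 : t₀ - t₀ = 0 := by ring
  rw [e1]
  rw [integral_rpow (Or.inl (show (-1:ℝ) < -α by linarith))]
  have e2 : -α + 1 = 1 - α := by ring
  rw [e2, Real.zero_rpow (show (1:ℝ) - α ≠ 0 by intro h; linarith [sub_eq_zero.mp h]), sub_zero]

lemma ibp_key {t₀ α b : ℝ} (hα0 : 0 < α) (hb : 0 < b) (hbt : b < t₀)
    (f f' : ℝ → ℝ)
    (hf' : IntegrableOn f' (Ioo 0 b))
    (hker : IntegrableOn (fun τ => (t₀ - τ) ^ (-α) * f' τ) (Ioo 0 b))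
    (hfs : ∀ s ∈ Ioc 0 b, f s = ∫ τ in Ioo 0 s, f' τ) :
    ∫ τ in Ioo 0 b, (t₀ - τ) ^ (-α) * f' τ
      = (t₀ - b) ^ (-α) * f b - ∫ s in Ioc 0 b, (α * (t₀ - s) ^ (-α - 1)) * f s := by
  set g' : ℝ → ℝ := fun s => α * (t₀ - s) ^ (-α - 1) with hg'def
  have hg'c : ContinuousOn g' (Icc 0 b) := by
    apply continuousOn_const.mul
    apply ContinuousOn.rpow_const (continuousOn_const.sub continuousOn_id)
    intro s hs; left; intro h; have h : t₀ - s = 0 := h; have := hs.2; linarith [sub_eq_zero.mp h]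
  have hg'nn : ∀ s ∈ Icc (0:ℝ) b, 0 ≤ g' s := by
    intro s hs
    exact mul_nonneg hα0.le (Real.rpow_nonneg (by linarith [hs.2]) _)
  have hg'bdd : ∀ s ∈ Icc (0:ℝ) b, g' s ≤ α * (t₀ - b) ^ (-α - 1) := by
    intro s hs
    apply mul_le_mul_of_nonneg_left ?_ hα0.le
    have h1 : (-α - 1 : ℝ) = -(α+1) := by ring
    rw [h1]
    exact rpow_neg_anti (by linarith) (by linarith [hs.2]) (by linarith)
  set K : ℝ → ℝ → ℝ := fun τ s => if τ < s then f' τ * g' s else 0 with hKdef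
  set P := (volume.restrict (Ioo (0:ℝ) b)).prod (volume.restrict (Ioc (0:ℝ) b)) with hPdef
  have hPr : P = (volume.prod volume).restrict ((Ioo (0:ℝ) b) ×ˢ (Ioc (0:ℝ) b)) :=
    Measure.prod_restrict _ _
  have hF : AEStronglyMeasurable (fun p : ℝ × ℝ => f' p.1 * g' p.2) P := by
    apply AEStronglyMeasurable.mul
    · exact hf'.aestronglyMeasurable.comp_fst
    · exact ((hg'c.mono Ioc_subset_Icc_self).aestronglyMeasurable measurableSet_Ioc).comp_snd
  have hKmeas : AEStronglyMeasurable (Function.uncurry K) P := by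
    have : Function.uncurry K = Set.indicator {p : ℝ × ℝ | p.1 < p.2}
        (fun p => f' p.1 * g' p.2) := by
      funext p
      simp only [Function.uncurry, Set.indicator_apply, mem_setOf_eq, hKdef]
    rw [this]
    exact hF.indicator (measurableSet_lt measurable_fst measurable_snd)
  have hKint : Integrable (Function.uncurry K) P := by
    apply Integrable.mono' (g := fun p : ℝ × ℝ => |f' p.1| * (α * (t₀ - b) ^ (-α - 1)))
    · exact Integrable.mul_prod hf'.norm (integrable_const _)
    · exact hKmeas
    · rw [hPr]
      filter_upwards [ae_restrict_mem (measurableSet_Ioo.prod measurableSet_Ioc)] with p hp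
      obtain ⟨hp1, hp2⟩ := hp
      rw [Real.norm_eq_abs]
      by_cases h : p.1 < p.2
      · simp only [Function.uncurry, hKdef, if_pos h, abs_mul]
        apply mul_le_mul_of_nonneg_left ?_ (abs_nonneg _)
        rw [abs_of_nonneg (hg'nn _ (Ioc_subset_Icc_self hp2))]
        exact hg'bdd _ (Ioc_subset_Icc_self hp2)
      · simp only [Function.uncurry, hKdef, if_neg h, abs_zero]
        exact mul_nonneg (abs_nonneg _) (mul_nonneg hα0.le (Real.rpow_nonneg (by linarith) _))
  have hswap := MeasureTheory.integral_integral_swap (f := K) (by rwa [hPdef] at hKint)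
  have ha : ∀ τ ∈ Ioo (0:ℝ) b, (∫ s in Ioc (0:ℝ) b, K τ s)
      = f' τ * ((t₀ - b) ^ (-α) - (t₀ - τ) ^ (-α)) := by
    intro τ hτ
    have h1 : (fun s => K τ s) = (Ioi τ).indicator (fun s => f' τ * g' s) := by
      funext s
      simp only [hKdef, Set.indicator_apply, mem_Ioi]
    rw [h1, setIntegral_indicator measurableSet_Ioi]
    have h2 : Ioc (0:ℝ) b ∩ Ioi τ = Ioc τ b := by
      ext s; simp only [mem_inter_iff, mem_Ioc, mem_Ioi]
      constructor
      · rintro ⟨⟨_, h2⟩, h3⟩; exact ⟨h3, h2⟩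
      · rintro ⟨h2, h3⟩; exact ⟨⟨hτ.1.trans h2, h3⟩, h2⟩
    rw [h2, integral_const_mul, ftc_ker hτ.2.le hbt]
  have hbb : ∀ s ∈ Ioc (0:ℝ) b, (∫ τ in Ioo (0:ℝ) b, K τ s) = g' s * f s := by
    intro s hs
    have h1 : (fun τ => K τ s) = (Iio s).indicator (fun τ => f' τ * g' s) := by
      funext τ
      simp only [hKdef, Set.indicator_apply, mem_Iio]
    rw [h1, setIntegral_indicator measurableSet_Iio]
    have h2 : Ioo (0:ℝ) b ∩ Iio s = Ioo 0 s := by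
      ext τ; simp only [mem_inter_iff, mem_Ioo, mem_Iio]
      constructor
      · rintro ⟨⟨h3, _⟩, h4⟩; exact ⟨h3, h4⟩
      · rintro ⟨h3, h4⟩; exact ⟨⟨h3, h4.trans_le hs.2⟩, h4⟩
    rw [h2, integral_mul_const, hfs s hs, mul_comm]
  have hL : (∫ τ in Ioo (0:ℝ) b, ∫ s in Ioc (0:ℝ) b, K τ s)
      = (t₀ - b) ^ (-α) * f b - ∫ τ in Ioo (0:ℝ) b, (t₀ - τ) ^ (-α) * f' τ := by
    rw [setIntegral_congr_fun measurableSet_Ioo ha]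
    have : (fun τ => f' τ * ((t₀ - b) ^ (-α) - (t₀ - τ) ^ (-α)))
        = fun τ => (t₀ - b) ^ (-α) * f' τ - (t₀ - τ) ^ (-α) * f' τ := by
      funext τ; ring
    rw [this, integral_sub (hf'.const_mul _) hker, integral_const_mul,
      ← hfs b ⟨hb, le_rfl⟩]
  have hR : (∫ s in Ioc (0:ℝ) b, ∫ τ in Ioo (0:ℝ) b, K τ s)
      = ∫ s in Ioc (0:ℝ) b, g' s * f s :=
    setIntegral_congr_fun measurableSet_Ioc hbb
  rw [hL, hR] at hswap
  have : (fun s => (α * (t₀ - s) ^ (-α - 1)) * f s) = fun s => g' s * f s := rfl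
  rw [this]
  linarith [hswap]

/-- comparison principle: if `f` is absolutely continuous on
`[0,T]` with `f(0) = 0`, `f' ∈ L^∞(κ,T)` for every `κ ∈ (0,T)`, and
`(k * f')(t) + λ f(t) ≤ 0` for all `t ∈ (0,T]`, then `f ≤ 0` on `[0,T]`. -/
theorem comparison_nonpositive (μ : ℝ → ℝ)
    (hmeas : Measurable μ)
    (hnn : ∀ α ∈ Icc (0:ℝ) 1, 0 ≤ μ α)
    (hint : IntegrableOn μ (Ioo 0 1))
    (hpos : 0 < ∫ α in Ioo (0:ℝ) 1, μ α)
    (lam T : ℝ) (hlam : 0 < lam) (hT : 0 < T)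
    (f f' : ℝ → ℝ)
    (hf'int : IntervalIntegrable f' volume 0 T)
    (hf0 : f 0 = 0)
    (hfAC : ∀ t ∈ Icc (0:ℝ) T, f t = f 0 + ∫ s in (0:ℝ)..t, f' s)
    (hf'bdd : ∀ κ ∈ Ioo (0:ℝ) T, ∃ M : ℝ,
      ∀ᵐ t ∂(volume.restrict (Ioo κ T)), |f' t| ≤ M)
    (hineq : ∀ t ∈ Ioc (0:ℝ) T,
      (∫ τ in (0:ℝ)..t, kker μ (t - τ) * f' τ) + lam * f t ≤ 0) :
    ∀ t ∈ Icc (0:ℝ) T, f t ≤ 0 := by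
  by_contra hcon
  push_neg at hcon
  obtain ⟨t₁, ht₁, hft₁⟩ := hcon
  obtain ⟨c, hc0, hcΓ⟩ := gamma_lb
  -- continuity of f on [0,T]
  have hfc : ContinuousOn f (Icc 0 T) := by
    have h1 : ContinuousOn (fun t => f 0 + ∫ s in (0:ℝ)..t, f' s) (Icc 0 T) := by
      apply continuousOn_const.add
      have := intervalIntegral.continuousOn_primitive_interval' hf'int
        (left_mem_uIcc (a := (0:ℝ)) (b := T))
      rwa [uIcc_of_le hT.le] at this
    exact h1.congr (fun t ht => hfAC t ht)
  -- max point
  obtain ⟨t₀, ht₀mem, ht₀max⟩ := isCompact_Icc.exists_isMaxOn (nonempty_Icc.mpr hT.le) hfc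
  have hmax : ∀ x ∈ Icc (0:ℝ) T, f x ≤ f t₀ := fun x hx => ht₀max hx
  have hft₀ : 0 < f t₀ := hft₁.trans_le (hmax t₁ ht₁)
  have ht₀ne : t₀ ≠ 0 := by intro h; rw [h, hf0] at hft₀; exact lt_irrefl 0 hft₀
  have ht₀pos : 0 < t₀ := ht₀mem.1.lt_of_ne (Ne.symm ht₀ne)
  have ht₀T : t₀ ≤ T := ht₀mem.2
  -- bound on f' near t₀
  obtain ⟨M₀, hM₀⟩ := hf'bdd (t₀/2) ⟨by linarith, by linarith⟩
  set M := max M₀ 0 with hMdef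
  have hM : ∀ᵐ τ ∂(volume.restrict (Ioo (t₀/2) T)), |f' τ| ≤ M :=
    hM₀.mono (fun τ h => h.trans (le_max_left _ _))
  have hMnn : (0:ℝ) ≤ M := le_max_right _ _
  -- f as integral of f'
  have hfs : ∀ s ∈ Icc (0:ℝ) T, f s = ∫ τ in Ioo 0 s, f' τ := by
    intro s hs
    rw [hfAC s hs, hf0, zero_add, intervalIntegral.integral_of_le hs.1,
      integral_Ioc_eq_integral_Ioo]
  have hf'Ioc : IntegrableOn f' (Ioc 0 T) := hf'int.1
  have hsub1 : Ioo (0:ℝ) t₀ ⊆ Ioc 0 T := fun x hx => ⟨hx.1, hx.2.le.trans ht₀T⟩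
  have hf'aesm : AEStronglyMeasurable f' (volume.restrict (Ioo 0 t₀)) :=
    hf'Ioc.aestronglyMeasurable.mono_measure (Measure.restrict_mono hsub1 le_rfl)
  -- Lipschitz bound near t₀
  have hlip : ∀ b ∈ Icc (t₀/2) t₀, |f t₀ - f b| ≤ M * (t₀ - b) := by
    intro b hb
    have hb0 : (0:ℝ) ≤ b := le_trans (by linarith) hb.1
    have hbT : b ≤ T := hb.2.trans ht₀T
    have hIb : IntervalIntegrable f' volume 0 b :=
      hf'int.mono_set (by rw [uIcc_of_le hb0, uIcc_of_le hT.le]; exact Icc_subset_Icc le_rfl hbT)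
    have hIt : IntervalIntegrable f' volume 0 t₀ :=
      hf'int.mono_set (by rw [uIcc_of_le ht₀pos.le, uIcc_of_le hT.le]
                          exact Icc_subset_Icc le_rfl ht₀T)
    have heq : f t₀ - f b = ∫ τ in Ioo b t₀, f' τ := by
      rw [hfAC t₀ ⟨ht₀pos.le, ht₀T⟩, hfAC b ⟨hb0, hbT⟩]
      have := intervalIntegral.integral_interval_sub_left hIt hIb
      rw [add_sub_add_left_eq_sub, this, intervalIntegral.integral_of_le hb.2,
        integral_Ioc_eq_integral_Ioo]
    rw [heq]
    have hboundae : ∀ᵐ τ ∂(volume.restrict (Ioo b t₀)), ‖f' τ‖ ≤ M := by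
      have hss : Ioo b t₀ ⊆ Ioo (t₀/2) T := fun x hx =>
        ⟨lt_of_le_of_lt hb.1 hx.1, lt_of_lt_of_le hx.2 ht₀T⟩
      exact (ae_restrict_of_ae_restrict_of_subset hss hM).mono (fun τ h => by
        rwa [Real.norm_eq_abs])
    calc |∫ τ in Ioo b t₀, f' τ| = ‖∫ τ in Ioo b t₀, f' τ‖ := (Real.norm_eq_abs _).symm
    _ ≤ ∫ τ in Ioo b t₀, M := norm_integral_le_of_norm_le (integrable_const M) hboundae
    _ = M * (t₀ - b) := by
        rw [setIntegral_const, Real.volume_real_Ioo_of_le hb.2, smul_eq_mul, mul_comm]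
  -- kernel measurability
  have hkerc : ∀ α : ℝ, ContinuousOn (fun τ => (t₀ - τ) ^ (-α)) (Iio t₀) := by
    intro α
    apply ContinuousOn.rpow_const (continuousOn_const.sub continuousOn_id)
    intro τ hτ
    left; intro h; have h : t₀ - τ = 0 := h
    have := sub_eq_zero.mp h
    rw [mem_Iio] at hτ; linarith
  have hkermeas : ∀ α : ℝ, AEStronglyMeasurable (fun τ => (t₀ - τ) ^ (-α) * f' τ)
      (volume.restrict (Ioo 0 t₀)) := by
    intro α
    exact (((hkerc α).mono (fun x hx => hx.2)).aestronglyMeasurable measurableSet_Ioo).mul hf'aesm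
  -- integrability of kernel * f' on (0, t₀), for α ∈ (0,1)
  have hker_int : ∀ α ∈ Ioo (0:ℝ) 1,
      IntegrableOn (fun τ => (t₀ - τ) ^ (-α) * f' τ) (Ioo 0 t₀) := by
    intro α hα
    have hd : Ioc (0:ℝ) (t₀/2) ∪ Ioo (t₀/2) t₀ = Ioo 0 t₀ :=
      Ioc_union_Ioo_eq_Ioo (by linarith) (by linarith)
    rw [← hd]
    apply IntegrableOn.union
    · -- on Ioc 0 (t₀/2)
      apply Integrable.mono' (g := fun τ => (t₀/2) ^ (-α) * |f' τ|)
      · exact ((hf'Ioc.mono_set (Ioc_subset_Ioc le_rfl (by linarith))).norm).const_mul _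
      · exact (hkermeas α).mono_measure (Measure.restrict_mono
          (show Ioc (0:ℝ) (t₀/2) ⊆ Ioo 0 t₀ from
            fun x hx => ⟨hx.1, lt_of_le_of_lt hx.2 (by linarith)⟩) le_rfl)
      · filter_upwards [ae_restrict_mem measurableSet_Ioc] with τ hτ
        rw [Real.norm_eq_abs, abs_mul, abs_of_nonneg (Real.rpow_nonneg (by linarith [hτ.2]) _)]
        apply mul_le_mul_of_nonneg_right ?_ (abs_nonneg _)
        exact rpow_neg_anti (by linarith) (by linarith [hτ.2]) hα.1.le
    · -- on Ioo (t₀/2) t₀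
      apply Integrable.mono' (g := fun τ => M * (t₀ - τ) ^ (-α))
      · exact (((ker_II hα.2 (by linarith)).1).mono_set Ioo_subset_Ioc_self).const_mul M
      · exact (hkermeas α).mono_measure (Measure.restrict_mono
          (show Ioo (t₀/2) t₀ ⊆ Ioo 0 t₀ from
            fun x hx => ⟨by linarith [hx.1], hx.2⟩) le_rfl)
      · have hss : Ioo (t₀/2) t₀ ⊆ Ioo (t₀/2) T := Ioo_subset_Ioo le_rfl ht₀T
        filter_upwards [ae_restrict_of_ae_restrict_of_subset hss hM,
          ae_restrict_mem measurableSet_Ioo] with τ hτM hτ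
        rw [Real.norm_eq_abs, abs_mul, abs_of_nonneg (Real.rpow_nonneg (by linarith [hτ.2]) _),
          mul_comm M]
        exact mul_le_mul_of_nonneg_left hτM (Real.rpow_nonneg (by linarith [hτ.2]) _)
  -- Step A : nonnegativity of the fractional integral at the max point
  set I : ℝ → ℝ := fun α => ∫ τ in Ioo 0 t₀, (t₀ - τ) ^ (-α) * f' τ with hIdef
  have hInn : ∀ α ∈ Ioo (0:ℝ) 1, 0 ≤ I α := by
    intro α hα
    obtain ⟨hα0, hα1⟩ := hα
    have h1α : (0:ℝ) < 1 - α := by linarith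
    set C := M * (1 + (1 - α)⁻¹) with hCdef
    have key : ∀ ε ∈ Ioc (0:ℝ) (t₀/2), -(C * ε ^ (1 - α)) ≤ I α := by
      intro ε hε
      obtain ⟨hε0, hε2⟩ := hε
      set b := t₀ - ε with hbdef
      have hb0 : 0 < b := by simp only [hbdef]; linarith
      have hbt : b < t₀ := by simp only [hbdef]; linarith
      have hbge : t₀/2 ≤ b := by simp only [hbdef]; linarith
      have htb : t₀ - b = ε := by simp only [hbdef]; ring
      -- split
      have hd : Ioc (0:ℝ) b ∪ Ioo b t₀ = Ioo 0 t₀ := Ioc_union_Ioo_eq_Ioo hb0.le hbt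
      have hint1 : IntegrableOn (fun τ => (t₀ - τ) ^ (-α) * f' τ) (Ioc 0 b) :=
        (hker_int α ⟨hα0, hα1⟩).mono_set (by rw [← hd]; exact subset_union_left)
      have hint2 : IntegrableOn (fun τ => (t₀ - τ) ^ (-α) * f' τ) (Ioo b t₀) :=
        (hker_int α ⟨hα0, hα1⟩).mono_set (by rw [← hd]; exact subset_union_right)
      have hsplit : I α = (∫ τ in Ioc 0 b, (t₀ - τ) ^ (-α) * f' τ)
          + ∫ τ in Ioo b t₀, (t₀ - τ) ^ (-α) * f' τ := by
        rw [hIdef, ← hd]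
        have hdis : Disjoint (Ioc (0:ℝ) b) (Ioo b t₀) := by
          apply Set.disjoint_left.mpr
          rintro x hx1 hx2
          exact absurd hx2.1 (not_lt.mpr hx1.2)
        exact setIntegral_union hdis measurableSet_Ioo hint1 hint2
      -- IBP on (0,b)
      have hfs' : ∀ s ∈ Ioc (0:ℝ) b, f s = ∫ τ in Ioo 0 s, f' τ := fun s hs =>
        hfs s ⟨hs.1.le, hs.2.trans (hbt.le.trans ht₀T)⟩
      have hJ := ibp_key hα0 hb0 hbt f f'
        (hf'Ioc.mono_set (show Ioo (0:ℝ) b ⊆ Ioc 0 T from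
          fun x hx => ⟨hx.1, hx.2.le.trans (hbt.le.trans ht₀T)⟩))
        ((hker_int α ⟨hα0, hα1⟩).mono_set (Ioo_subset_Ioo le_rfl hbt.le))
        hfs'
      rw [htb] at hJ
      -- bound the g'·f integral
      have hg'c : ContinuousOn (fun s => α * (t₀ - s) ^ (-α - 1)) (Icc 0 b) := by
        apply continuousOn_const.mul
        apply ContinuousOn.rpow_const (continuousOn_const.sub continuousOn_id)
        intro s hs; left; intro h; have h : t₀ - s = 0 := h
        have := hs.2; linarith [sub_eq_zero.mp h]
      have hg'nn : ∀ s ∈ Ioc (0:ℝ) b, 0 ≤ α * (t₀ - s) ^ (-α - 1) := fun s hs =>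
        mul_nonneg hα0.le (Real.rpow_nonneg (by linarith [hs.2]) _)
      have hg'int : IntegrableOn (fun s => (α * (t₀ - s) ^ (-α - 1)) * f s) (Ioc 0 b) :=
        ((hg'c.mul (hfc.mono (Icc_subset_Icc le_rfl (hbt.le.trans ht₀T)))).integrableOn_Icc).mono_set
          Ioc_subset_Icc_self
      have hg'int2 : IntegrableOn (fun s => (α * (t₀ - s) ^ (-α - 1)) * f t₀) (Ioc 0 b) :=
        ((hg'c.mul continuousOn_const).integrableOn_Icc).mono_set Ioc_subset_Icc_self
      have hgf_le : (∫ s in Ioc 0 b, (α * (t₀ - s) ^ (-α - 1)) * f s)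
          ≤ f t₀ * (ε ^ (-α) - t₀ ^ (-α)) := by
        have h1 : (∫ s in Ioc 0 b, (α * (t₀ - s) ^ (-α - 1)) * f s)
            ≤ ∫ s in Ioc 0 b, (α * (t₀ - s) ^ (-α - 1)) * f t₀ := by
          apply setIntegral_mono_on hg'int hg'int2 measurableSet_Ioc
          intro s hs
          exact mul_le_mul_of_nonneg_left
            (hmax s ⟨hs.1.le, hs.2.trans (hbt.le.trans ht₀T)⟩) (hg'nn s hs)
        have h2 : (∫ s in Ioc 0 b, (α * (t₀ - s) ^ (-α - 1)) * f t₀)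
            = f t₀ * (ε ^ (-α) - t₀ ^ (-α)) := by
          have e : (fun s => (α * (t₀ - s) ^ (-α - 1)) * f t₀)
              = fun s => f t₀ * (α * (t₀ - s) ^ (-α - 1)) := by funext s; ring
          rw [e, integral_const_mul, ftc_ker hb0.le hbt, htb, sub_zero]
        linarith
      -- lower bound for J
      have hfb : -(M * ε) ≤ f b - f t₀ := by
        have h := hlip b ⟨hbge, hbt.le⟩
        rw [htb] at h
        have := abs_le.mp h
        linarith [this.2]
      have hεα : (0:ℝ) ≤ ε ^ (-α) := Real.rpow_nonneg hε0.le _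
      have hpow : ε ^ (-α) * ε = ε ^ (1 - α) := by
        rw [show (1:ℝ) - α = -α + 1 by ring, Real.rpow_add hε0, Real.rpow_one]
      have hJlb : -(M * ε ^ (1 - α)) ≤ ∫ τ in Ioc 0 b, (t₀ - τ) ^ (-α) * f' τ := by
        rw [integral_Ioc_eq_integral_Ioo, hJ]
        have h5 : ε ^ (-α) * (-(M * ε)) ≤ ε ^ (-α) * (f b - f t₀) :=
          mul_le_mul_of_nonneg_left hfb hεα
        have h6 : 0 ≤ f t₀ * t₀ ^ (-α) :=
          mul_nonneg hft₀.le (Real.rpow_nonneg ht₀pos.le _)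
        have h7 : ε ^ (-α) * (-(M * ε)) = -(M * ε ^ (1 - α)) := by rw [← hpow]; ring
        have h8 : ε ^ (-α) * f b - ε ^ (-α) * f t₀ = ε ^ (-α) * (f b - f t₀) := by ring
        have h9 : f t₀ * (ε ^ (-α) - t₀ ^ (-α)) = ε ^ (-α) * f t₀ - f t₀ * t₀ ^ (-α) := by ring
        linarith
      -- tail bound
      have hRb : |∫ τ in Ioo b t₀, (t₀ - τ) ^ (-α) * f' τ| ≤ M * (ε ^ (1 - α) / (1 - α)) := by
        have hg2 : IntegrableOn (fun τ => M * (t₀ - τ) ^ (-α)) (Ioo b t₀) :=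
          ((ker_II hα1 hbt.le).1.mono_set Ioo_subset_Ioc_self).const_mul M
        have hbd : ∀ᵐ τ ∂(volume.restrict (Ioo b t₀)),
            ‖(t₀ - τ) ^ (-α) * f' τ‖ ≤ M * (t₀ - τ) ^ (-α) := by
          have hss : Ioo b t₀ ⊆ Ioo (t₀/2) T := fun x hx =>
            ⟨lt_of_le_of_lt hbge hx.1, lt_of_lt_of_le hx.2 ht₀T⟩
          filter_upwards [ae_restrict_of_ae_restrict_of_subset hss hM,
            ae_restrict_mem measurableSet_Ioo] with τ h1 h2
          rw [Real.norm_eq_abs, abs_mul, abs_of_nonneg (Real.rpow_nonneg (by linarith [h2.2]) _),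
            mul_comm M]
          exact mul_le_mul_of_nonneg_left h1 (Real.rpow_nonneg (by linarith [h2.2]) _)
        calc |∫ τ in Ioo b t₀, (t₀ - τ) ^ (-α) * f' τ|
            = ‖∫ τ in Ioo b t₀, (t₀ - τ) ^ (-α) * f' τ‖ := (Real.norm_eq_abs _).symm
        _ ≤ ∫ τ in Ioo b t₀, M * (t₀ - τ) ^ (-α) := norm_integral_le_of_norm_le hg2 hbd
        _ = M * (ε ^ (1 - α) / (1 - α)) := by
            rw [integral_const_mul, ker_integral hα0 hα1 hbt, htb]
      rw [hsplit]
      have hR1 := (abs_le.mp hRb).1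
      have hCe : C * ε ^ (1 - α) = M * ε ^ (1 - α) + M * (ε ^ (1 - α) / (1 - α)) := by
        rw [hCdef]; ring
      linarith
    -- take the limit ε → 0⁺
    have h2 : Filter.Tendsto (fun ε : ℝ => ε ^ (1 - α)) (nhds 0) (nhds ((0:ℝ) ^ (1 - α))) :=
      (Real.continuousAt_rpow_const 0 (1 - α) (Or.inr h1α.le)).tendsto
    rw [Real.zero_rpow (ne_of_gt h1α)] at h2
    have h3 := (h2.const_mul C).neg
    simp only [mul_zero, neg_zero] at h3
    have h4 : Filter.Tendsto (fun ε : ℝ => -(C * ε ^ (1 - α))) (nhdsWithin 0 (Ioi 0)) (nhds 0) :=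
      h3.mono_left nhdsWithin_le_nhds
    apply le_of_tendsto h4
    filter_upwards [Ioc_mem_nhdsGT (half_pos ht₀pos)] with ε hε using key ε hε
  -- Step B : outer Fubini
  set C1 : ℝ := max 1 (t₀/2)⁻¹ with hC1def
  set maxt : ℝ := max 1 (t₀/2) with hmaxtdef
  set L1 : ℝ := ∫ τ in Ioc (0:ℝ) T, |f' τ| with hL1def
  have hC1nn : (0:ℝ) ≤ C1 := le_trans zero_le_one (le_max_left _ _)
  have hmaxtnn : (0:ℝ) ≤ maxt := le_trans zero_le_one (le_max_left _ _)
  have hL1nn : (0:ℝ) ≤ L1 := setIntegral_nonneg measurableSet_Ioc (fun τ _ => abs_nonneg _)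
  set Kc : ℝ := (C1 * L1 + M * maxt) / c with hKcdef
  set G : ℝ → ℝ → ℝ := fun α τ => (t₀ - τ) ^ (-α) * μ α / Real.Gamma (1 - α) * f' τ with hGdef
  set Q := (volume.restrict (Ioo (0:ℝ) 1)).prod (volume.restrict (Ioo (0:ℝ) t₀)) with hQdef
  have hQr : Q = (volume.prod volume).restrict ((Ioo (0:ℝ) 1) ×ˢ (Ioo (0:ℝ) t₀)) :=
    Measure.prod_restrict _ _
  have hf'abs : IntegrableOn (fun τ => |f' τ|) (Ioc 0 T) := by
    have : IntegrableOn (fun τ => ‖f' τ‖) (Ioc 0 T) := hf'Ioc.norm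
    simpa only [Real.norm_eq_abs] using this
  -- measurability of G
  have hGmeas : AEStronglyMeasurable (Function.uncurry G) Q := by
    have c1 : ContinuousOn (fun p : ℝ × ℝ => (t₀ - p.2) ^ (-p.1))
        ((Ioo (0:ℝ) 1) ×ˢ (Ioo (0:ℝ) t₀)) := by
      apply ContinuousOn.rpow
      · exact (continuous_const.sub continuous_snd).continuousOn
      · exact continuous_fst.neg.continuousOn
      · rintro ⟨α, τ⟩ hp
        left
        have hτ : τ < t₀ := hp.2.2
        intro h
        have := sub_eq_zero.mp h
        linarith
    have c2 : ContinuousOn (fun p : ℝ × ℝ => (Real.Gamma (1 - p.1))⁻¹)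
        ((Ioo (0:ℝ) 1) ×ˢ (Ioo (0:ℝ) t₀)) := by
      intro p hp
      have h1 : 0 < 1 - p.1 := by have := hp.1.2; linarith
      have hg : DifferentiableAt ℝ Real.Gamma (1 - p.1) := by
        apply Real.differentiableAt_Gamma
        intro m h
        have : -(m:ℝ) ≤ 0 := by simp [Nat.cast_nonneg]
        linarith [h ▸ h1]
      have hin : ContinuousAt (fun p : ℝ × ℝ => 1 - p.1) p :=
        (continuous_const.sub continuous_fst).continuousAt
      have hcomp := ContinuousAt.comp (x := p) (f := fun p : ℝ × ℝ => 1 - p.1) hg.continuousAt hin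
      exact (hcomp.inv₀ (ne_of_gt (Real.Gamma_pos_of_pos h1))).continuousWithinAt
    have m1 : AEStronglyMeasurable (fun p : ℝ × ℝ => (t₀ - p.2) ^ (-p.1)) Q := by
      rw [hQr]
      exact c1.aestronglyMeasurable (measurableSet_Ioo.prod measurableSet_Ioo)
    have m2 : AEStronglyMeasurable (fun p : ℝ × ℝ => (Real.Gamma (1 - p.1))⁻¹) Q := by
      rw [hQr]
      exact c2.aestronglyMeasurable (measurableSet_Ioo.prod measurableSet_Ioo)
    have m3 : AEStronglyMeasurable (fun p : ℝ × ℝ => μ p.1) Q :=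
      (hmeas.comp measurable_fst).aestronglyMeasurable
    have m4 : AEStronglyMeasurable (fun p : ℝ × ℝ => f' p.2) Q := hf'aesm.comp_snd
    have : Function.uncurry G = fun p : ℝ × ℝ =>
        (t₀ - p.2) ^ (-p.1) * μ p.1 * (Real.Gamma (1 - p.1))⁻¹ * f' p.2 := by
      funext p
      simp only [hGdef, Function.uncurry, div_eq_mul_inv]
    rw [this]
    exact ((m1.mul m3).mul m2).mul m4
  -- norm of G
  have hGnorm : ∀ α ∈ Ioo (0:ℝ) 1, ∀ τ ∈ Ioo (0:ℝ) t₀,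
      ‖G α τ‖ = (μ α / Real.Gamma (1 - α)) * ((t₀ - τ) ^ (-α) * |f' τ|) := by
    intro α hα τ hτ
    have h1 : (0:ℝ) ≤ (t₀ - τ) ^ (-α) := Real.rpow_nonneg (by linarith [hτ.2]) _
    have h2 : 0 ≤ μ α := hnn α ⟨hα.1.le, hα.2.le⟩
    have h3 : 0 < Real.Gamma (1 - α) := Real.Gamma_pos_of_pos (by linarith [hα.2])
    simp only [hGdef, Real.norm_eq_abs]
    rw [abs_mul, abs_div, abs_mul, abs_of_nonneg h1, abs_of_nonneg h2, abs_of_nonneg h3.le]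
    ring
  -- bound for the τ-integral of ‖G‖
  have hnormbound : ∀ α ∈ Ioo (0:ℝ) 1, (∫ τ in Ioo (0:ℝ) t₀, ‖G α τ‖) ≤ μ α * Kc := by
    intro α hα
    obtain ⟨hα0, hα1⟩ := hα
    have h1α : (0:ℝ) < 1 - α := by linarith
    have hΓpos : 0 < Real.Gamma (1 - α) := Real.Gamma_pos_of_pos h1α
    have hμα : 0 ≤ μ α := hnn α ⟨hα0.le, hα1.le⟩
    have habs : IntegrableOn (fun τ => (t₀ - τ) ^ (-α) * |f' τ|) (Ioo 0 t₀) := by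
      apply Integrable.congr (hker_int α ⟨hα0, hα1⟩).norm
      filter_upwards [ae_restrict_mem measurableSet_Ioo] with τ hτ
      rw [Real.norm_eq_abs, abs_mul, abs_of_nonneg (Real.rpow_nonneg (by linarith [hτ.2]) _)]
    have heq : (∫ τ in Ioo (0:ℝ) t₀, ‖G α τ‖)
        = (μ α / Real.Gamma (1 - α)) * ∫ τ in Ioo (0:ℝ) t₀, (t₀ - τ) ^ (-α) * |f' τ| := by
      rw [setIntegral_congr_fun measurableSet_Ioo (fun τ hτ => hGnorm α ⟨hα0, hα1⟩ τ hτ),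
        integral_const_mul]
    -- split of the inner integral
    have hsplitset : Ioc (0:ℝ) (t₀/2) ∪ Ioo (t₀/2) t₀ = Ioo 0 t₀ :=
      Ioc_union_Ioo_eq_Ioo (by linarith) (by linarith)
    have hdisj : Disjoint (Ioc (0:ℝ) (t₀/2)) (Ioo (t₀/2) t₀) := by
      apply Set.disjoint_left.mpr
      rintro x hx1 hx2
      exact absurd hx2.1 (not_lt.mpr hx1.2)
    have hsub1' : Ioc (0:ℝ) (t₀/2) ⊆ Ioo 0 t₀ := by rw [← hsplitset]; exact subset_union_left
    have hsub2' : Ioo (t₀/2) t₀ ⊆ Ioo (0:ℝ) t₀ := by rw [← hsplitset]; exact subset_union_right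
    have hsplit2 : (∫ τ in Ioo (0:ℝ) t₀, (t₀ - τ) ^ (-α) * |f' τ|)
        = (∫ τ in Ioc (0:ℝ) (t₀/2), (t₀ - τ) ^ (-α) * |f' τ|)
          + ∫ τ in Ioo (t₀/2) t₀, (t₀ - τ) ^ (-α) * |f' τ| := by
      rw [← hsplitset]
      exact setIntegral_union hdisj measurableSet_Ioo (habs.mono_set hsub1')
        (habs.mono_set hsub2')
    have hp1 : (∫ τ in Ioc (0:ℝ) (t₀/2), (t₀ - τ) ^ (-α) * |f' τ|) ≤ C1 * L1 := by
      have hf'half : IntegrableOn (fun τ => |f' τ|) (Ioc 0 (t₀/2)) :=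
        hf'abs.mono_set (Ioc_subset_Ioc le_rfl (by linarith))
      calc (∫ τ in Ioc (0:ℝ) (t₀/2), (t₀ - τ) ^ (-α) * |f' τ|)
          ≤ ∫ τ in Ioc (0:ℝ) (t₀/2), C1 * |f' τ| := by
            apply setIntegral_mono_on (habs.mono_set hsub1') (hf'half.const_mul C1)
              measurableSet_Ioc
            intro τ hτ
            apply mul_le_mul_of_nonneg_right ?_ (abs_nonneg _)
            exact le_trans (rpow_neg_anti (by linarith) (by linarith [hτ.2]) hα0.le)
              (rpow_neg_le_max (by linarith) hα0.le hα1.le)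
      _ = C1 * ∫ τ in Ioc (0:ℝ) (t₀/2), |f' τ| := integral_const_mul _ _
      _ ≤ C1 * L1 := by
            apply mul_le_mul_of_nonneg_left ?_ hC1nn
            apply setIntegral_mono_set hf'abs
              (Filter.Eventually.of_forall (fun τ => abs_nonneg _))
              (HasSubset.Subset.eventuallyLE (Ioc_subset_Ioc le_rfl (by linarith)))
    have hp2 : (∫ τ in Ioo (t₀/2) t₀, (t₀ - τ) ^ (-α) * |f' τ|) ≤ M * (maxt * (1 - α)⁻¹) := by
      have hker2int : IntegrableOn (fun τ => M * (t₀ - τ) ^ (-α)) (Ioo (t₀/2) t₀) :=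
        ((ker_II hα1 (by linarith)).1.mono_set Ioo_subset_Ioc_self).const_mul M
      calc (∫ τ in Ioo (t₀/2) t₀, (t₀ - τ) ^ (-α) * |f' τ|)
          ≤ ∫ τ in Ioo (t₀/2) t₀, M * (t₀ - τ) ^ (-α) := by
            apply integral_mono_ae (habs.mono_set hsub2') hker2int
            filter_upwards [ae_restrict_of_ae_restrict_of_subset
              (Ioo_subset_Ioo le_rfl ht₀T) hM, ae_restrict_mem measurableSet_Ioo] with τ h1 h2
            calc (t₀ - τ) ^ (-α) * |f' τ| ≤ (t₀ - τ) ^ (-α) * M :=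
                  mul_le_mul_of_nonneg_left h1 (Real.rpow_nonneg (by linarith [h2.2]) _)
            _ = M * (t₀ - τ) ^ (-α) := mul_comm _ _
      _ = M * ((t₀ - t₀/2) ^ (1 - α) / (1 - α)) := by
            rw [integral_const_mul, ker_integral hα0 hα1 (by linarith)]
      _ ≤ M * (maxt * (1 - α)⁻¹) := by
            apply mul_le_mul_of_nonneg_left ?_ hMnn
            rw [div_eq_mul_inv]
            apply mul_le_mul_of_nonneg_right ?_ (inv_nonneg.mpr h1α.le)
            rw [show t₀ - t₀/2 = t₀/2 by ring]
            exact rpow_le_max (by linarith) h1α.le (by linarith)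
    -- Gamma lower bounds
    have hΓ2 : c ≤ (1 - α) * Real.Gamma (1 - α) := by
      have hg := Real.Gamma_add_one (ne_of_gt h1α)
      have h2α : (1:ℝ) - α + 1 ∈ Icc (1:ℝ) 2 := ⟨by linarith, by linarith⟩
      calc c ≤ Real.Gamma (1 - α + 1) := hcΓ _ h2α
      _ = (1 - α) * Real.Gamma (1 - α) := hg
    have hΓ1 : c ≤ Real.Gamma (1 - α) := by
      have := mul_le_of_le_one_left hΓpos.le (show (1:ℝ) - α ≤ 1 by linarith)
      linarith
    -- combine
    have k1 : (Real.Gamma (1 - α))⁻¹ ≤ c⁻¹ := inv_anti₀ hc0 hΓ1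
    have k2 : ((1 - α) * Real.Gamma (1 - α))⁻¹ ≤ c⁻¹ := inv_anti₀ hc0 hΓ2
    have hA1nn : (0:ℝ) ≤ C1 * L1 := mul_nonneg hC1nn hL1nn
    have hA2nn : (0:ℝ) ≤ M * maxt := mul_nonneg hMnn hmaxtnn
    have k4 : (C1 * L1) * (Real.Gamma (1 - α))⁻¹ ≤ (C1 * L1) * c⁻¹ :=
      mul_le_mul_of_nonneg_left k1 hA1nn
    have k5 : (M * maxt) * ((1 - α)⁻¹ * (Real.Gamma (1 - α))⁻¹) ≤ (M * maxt) * c⁻¹ := by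
      rw [← mul_inv]
      exact mul_le_mul_of_nonneg_left k2 hA2nn
    rw [heq]
    calc (μ α / Real.Gamma (1 - α)) * (∫ τ in Ioo (0:ℝ) t₀, (t₀ - τ) ^ (-α) * |f' τ|)
        ≤ (μ α / Real.Gamma (1 - α)) * (C1 * L1 + M * (maxt * (1 - α)⁻¹)) := by
          apply mul_le_mul_of_nonneg_left ?_ (div_nonneg hμα hΓpos.le)
          linarith [hp1, hp2, hsplit2.ge, hsplit2.le]
    _ = μ α * ((C1 * L1) * (Real.Gamma (1 - α))⁻¹
          + (M * maxt) * ((1 - α)⁻¹ * (Real.Gamma (1 - α))⁻¹)) := by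
          rw [div_eq_mul_inv]; ring
    _ ≤ μ α * ((C1 * L1) * c⁻¹ + (M * maxt) * c⁻¹) :=
          mul_le_mul_of_nonneg_left (add_le_add k4 k5) hμα
    _ = μ α * Kc := by rw [hKcdef, div_eq_mul_inv]; ring
  -- integrability of G on the product
  have hGint : Integrable (Function.uncurry G) Q := by
    apply (integrable_prod_iff hGmeas).2
    constructor
    · filter_upwards [ae_restrict_mem measurableSet_Ioo] with α hα
      apply Integrable.congr ((hker_int α hα).const_mul (μ α / Real.Gamma (1 - α)))
      apply Filter.Eventually.of_forall
      intro τ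
      simp only [hGdef, Function.uncurry]
      ring
    · apply Integrable.mono' (hint.mul_const Kc) hGmeas.norm.integral_prod_right'
      filter_upwards [ae_restrict_mem measurableSet_Ioo] with α hα
      rw [Real.norm_eq_abs, abs_of_nonneg (integral_nonneg (fun τ => norm_nonneg _))]
      exact hnormbound α hα
  have hswap := MeasureTheory.integral_integral_swap (f := G) (by rwa [hQdef] at hGint)
  -- rewrite the convolution
  have hconv : (∫ τ in (0:ℝ)..t₀, kker μ (t₀ - τ) * f' τ)
      = ∫ α in Ioo (0:ℝ) 1, ∫ τ in Ioo (0:ℝ) t₀, G α τ := by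
    rw [intervalIntegral.integral_of_le ht₀pos.le, integral_Ioc_eq_integral_Ioo, hswap]
    apply setIntegral_congr_fun measurableSet_Ioo
    intro τ hτ
    show kker μ (t₀ - τ) * f' τ = _
    rw [kker, ← integral_mul_const]
  have hconv_nn : 0 ≤ ∫ τ in (0:ℝ)..t₀, kker μ (t₀ - τ) * f' τ := by
    rw [hconv]
    apply setIntegral_nonneg measurableSet_Ioo
    intro α hα
    have heqI : (∫ τ in Ioo (0:ℝ) t₀, G α τ) = (μ α / Real.Gamma (1 - α)) * I α := by
      calc (∫ τ in Ioo (0:ℝ) t₀, G α τ)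
          = ∫ τ in Ioo (0:ℝ) t₀, (μ α / Real.Gamma (1 - α)) * ((t₀ - τ) ^ (-α) * f' τ) :=
            setIntegral_congr_fun measurableSet_Ioo (fun τ _ => by simp only [hGdef]; ring)
      _ = (μ α / Real.Gamma (1 - α)) * I α := integral_const_mul _ _
    rw [heqI]
    exact mul_nonneg (div_nonneg (hnn α ⟨hα.1.le, hα.2.le⟩)
      (Real.Gamma_pos_of_pos (by linarith [hα.2])).le) (hInn α hα)
  have hfinal := hineq t₀ ⟨ht₀pos, ht₀T⟩
  nlinarith [mul_pos hlam hft₀]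
end

section
/- Let f : [0,T] → ℝ be absolutely continuous and attain its maximum over [0,T] at a point t₀ ∈ (0, T]. (i) If β ∈ (0,1] and f′ ∈ L^{1/(1−β)}(κ, T) for every κ > 0, then for every α ∈ (0, β): (1/Γ(1−α)) ∫₀^{t₀} (t₀ − τ)^{−α} f′(τ) dτ ≥ 0. (ii) In particular, if f′ ∈ L^∞(κ, T) for every κ > 0, then (D^α f)(t₀) ≥ 0 for every α ∈ (0,1), and ∫₀¹ (D^α f)(t₀) μ(α) dα ≥ 0 for every nonnegative μ ∈ L¹(0,1). -/
/-!
Write `k(τ) = (t₀ - τ)^{-α}`, which is nonnegative and increasing on `[0, t₀)`. For `S < t₀`,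
integrating by parts against the nonpositive function `f - f(t₀)` gives
`∫₀^S k f' ≥ k(S) (f(S) - f(t₀))`, because the boundary term at `0` and `-∫₀^S k' (f - f(t₀))`
are both nonnegative. Hölder's inequality with `f' ∈ L^{1/(1-β)}` near `t₀` bounds
`f(t₀) - f(S) ≤ C (t₀ - S)^β`, so `∫₀^S k f' ≥ -C (t₀ - S)^{β-α}`, which tends to `0` as `S → t₀⁻`
because `α < β`.
-/

open MeasureTheory Set Real Filter
open scoped ENNReal Topology

/-- The Caputo derivative of an absolutely continuous function with a.e. derivative
`f'`, evaluated at `t`: `(D^α f)(t) = (1/Γ(1-α)) ∫₀^t (t-τ)^{-α} f'(τ) dτ`. -/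
noncomputable def caputo (f' : ℝ → ℝ) (α t : ℝ) : ℝ :=
  (1 / Real.Gamma (1 - α)) * ∫ τ in (0:ℝ)..t, (t - τ) ^ (-α) * f' τ

theorem AbsolutelyContinuousOnInterval.mul_le_integral_mul_deriv {k g : ℝ → ℝ} {a b : ℝ}
    (hab : a ≤ b) (hk : AbsolutelyContinuousOnInterval k a b) (hk_mono : MonotoneOn k (Icc a b))
    (hka : 0 ≤ k a) (hg : AbsolutelyContinuousOnInterval g a b)
    (hg_nonpos : ∀ x ∈ Icc a b, g x ≤ 0) :
    k b * g b ≤ ∫ x in a..b, k x * deriv g x := by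
  have hderiv : ∀ x ∈ Ioo a b, 0 ≤ deriv k x := fun x hx => by
    rw [← derivWithin_of_mem_nhds (Icc_mem_nhds hx.1 hx.2)]
    exact hk_mono.derivWithin_nonneg
  have hboundary : 0 ≤ k a * -g a :=
    mul_nonneg hka (neg_nonneg.2 (hg_nonpos a (left_mem_Icc.2 hab)))
  have hinterior : ∫ x in a..b, deriv k x * g x ≤ 0 := by
    rw [← neg_nonneg, ← intervalIntegral.integral_neg]
    refine intervalIntegral.integral_nonneg_of_ae_restrict hab ?_
    rw [EventuallyLE, ← restrict_Ioo_eq_restrict_Icc]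
    filter_upwards [ae_restrict_mem measurableSet_Ioo] with x hx
    exact neg_nonneg.2 (mul_nonpos_of_nonneg_of_nonpos (hderiv x hx)
      (hg_nonpos x (Ioo_subset_Icc_self hx)))
  rw [hk.integral_mul_deriv_eq_deriv_mul hg]
  linarith

theorem mul_sub_le_integral_mul_of_le {k f f' : ℝ → ℝ} {a b M : ℝ} (hab : a ≤ b)
    (hk : AbsolutelyContinuousOnInterval k a b) (hk_mono : MonotoneOn k (Icc a b))
    (hka : 0 ≤ k a) (hf' : IntervalIntegrable f' volume a b)
    (hf : ∀ t ∈ Icc a b, f t = f a + ∫ s in a..t, f' s) (hM : ∀ t ∈ Icc a b, f t ≤ M) :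
    k b * (f b - M) ≤ ∫ τ in a..b, k τ * f' τ := by
  set g : ℝ → ℝ := fun t => (∫ s in a..t, f' s) - (M - f a)
  have hg_eq : ∀ t ∈ Icc a b, g t = f t - M := fun t ht => by simp only [g, hf t ht]; ring
  have hg : AbsolutelyContinuousOnInterval g a b :=
    (hf'.absolutelyContinuousOnInterval_intervalIntegral left_mem_uIcc).sub
      contDiffOn_const.absolutelyContinuousOnInterval
  have hderiv : ∀ᵐ τ, τ ∈ uIoc a b → k τ * f' τ = k τ * deriv g τ := by
    filter_upwards [hf'.ae_hasDerivAt_integral] with τ hτ hτab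
    rw [((hτ (uIoc_subset_uIcc hτab) a left_mem_uIcc).sub_const _).deriv]
  rw [intervalIntegral.integral_congr_ae hderiv, ← hg_eq b (right_mem_Icc.2 hab)]
  exact hk.mul_le_integral_mul_deriv hab hk_mono hka hg
    fun t ht => by rw [hg_eq t ht]; linarith [hM t ht]

theorem absolutelyContinuousOnInterval_sub_rpow {t₀ α a b : ℝ} (hab : a ≤ b) (hb : b < t₀) :
    AbsolutelyContinuousOnInterval (fun τ => (t₀ - τ) ^ (-α)) a b :=
  (contDiffOn_const.sub contDiffOn_id).rpow_const_of_ne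
    (fun x hx => by rw [uIcc_of_le hab] at hx; simp only [id]; linarith [hx.2])
    |>.absolutelyContinuousOnInterval

theorem monotoneOn_sub_rpow_neg {t₀ α a b : ℝ} (hα : 0 ≤ α) (hb : b < t₀) :
    MonotoneOn (fun τ => (t₀ - τ) ^ (-α)) (Icc a b) := fun x _ y hy hxy =>
  rpow_le_rpow_of_nonpos (by linarith [hy.2]) (by linarith) (neg_nonpos.2 hα)

theorem intervalIntegral_le_eLpNorm_mul_rpow {g : ℝ → ℝ} {a b : ℝ} {q : ℝ≥0∞} (hab : a ≤ b)
    (hq : 1 ≤ q) (hg : MemLp g q (volume.restrict (Ioc a b))) :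
    ∫ x in a..b, g x ≤
      (eLpNorm g q (volume.restrict (Ioc a b))).toReal * (b - a) ^ (1 - q.toReal⁻¹) := by
  have hexp : q.toReal⁻¹ ≤ 1 := by
    rcases eq_or_ne q ∞ with rfl | hq_top
    · simp
    · exact inv_le_one_of_one_le₀ (by simpa using ENNReal.toReal_mono hq_top hq)
  have hHolder := eLpNorm_le_eLpNorm_mul_rpow_measure_univ hq hg.aestronglyMeasurable
  rw [Measure.restrict_apply_univ, Real.volume_Ioc, ENNReal.toReal_one, one_div_one,
    one_div] at hHolder
  calc ∫ x in a..b, g x ≤ ∫ x in Ioc a b, ‖g x‖ := by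
        rw [intervalIntegral.integral_of_le hab]
        exact (le_abs_self _).trans (norm_integral_le_integral_norm g)
    _ = (eLpNorm g 1 (volume.restrict (Ioc a b))).toReal := by
        rw [eLpNorm_one_eq_lintegral_enorm,
          integral_norm_eq_lintegral_enorm hg.aestronglyMeasurable]
    _ ≤ (eLpNorm g q (volume.restrict (Ioc a b)) *
          ENNReal.ofReal (b - a) ^ (1 - q.toReal⁻¹)).toReal :=
        ENNReal.toReal_mono (ENNReal.mul_ne_top hg.eLpNorm_ne_top
          (ENNReal.rpow_ne_top_of_nonneg (sub_nonneg.2 hexp) ENNReal.ofReal_ne_top)) hHolder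
    _ = _ := by
        rw [ENNReal.toReal_mul, ← ENNReal.toReal_rpow, ENNReal.toReal_ofReal (sub_nonneg.2 hab)]

theorem one_le_one_div_ofReal_sub {β : ℝ} (hβ : 0 ≤ β) : 1 ≤ 1 / ENNReal.ofReal (1 - β) := by
  rw [one_div, ENNReal.one_le_inv]
  exact ENNReal.ofReal_le_one.2 (by linarith)

theorem toReal_one_div_ofReal_sub_inv {β : ℝ} (hβ : β ≤ 1) :
    (1 / ENNReal.ofReal (1 - β)).toReal⁻¹ = 1 - β := by
  rw [one_div, ENNReal.toReal_inv, inv_inv, ENNReal.toReal_ofReal (by linarith)]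

theorem intervalIntegral_le_eLpNorm_mul_rpow_of_subset {g : ℝ → ℝ} {a b c β : ℝ}
    (hab : a ≤ b) (hbc : b ≤ c) (hβ : β ∈ Icc 0 1)
    (hg : MemLp g (1 / ENNReal.ofReal (1 - β)) (volume.restrict (Ioc a c))) :
    ∫ x in b..c, g x ≤
      (eLpNorm g (1 / ENNReal.ofReal (1 - β)) (volume.restrict (Ioc a c))).toReal *
        (c - b) ^ β := by
  have hmono : volume.restrict (Ioc b c) ≤ volume.restrict (Ioc a c) :=
    Measure.restrict_mono (Ioc_subset_Ioc_left hab) le_rfl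
  calc ∫ x in b..c, g x ≤ _ := intervalIntegral_le_eLpNorm_mul_rpow hbc
        (one_le_one_div_ofReal_sub hβ.1) (hg.mono_measure hmono)
    _ ≤ _ := by
        rw [toReal_one_div_ofReal_sub_inv hβ.2, sub_sub_cancel]
        exact mul_le_mul_of_nonneg_right
          (ENNReal.toReal_mono hg.eLpNorm_ne_top (eLpNorm_mono_measure g hmono))
          (rpow_nonneg (sub_nonneg.2 hbc) _)

theorem nonneg_of_neg_mul_rpow_le {F : ℝ → ℝ} {a b C γ : ℝ} (hab : a < b) (hγ : 0 < γ)
    (hF : ContinuousWithinAt F (Ioo a b) b) (h : ∀ S ∈ Ioo a b, -(C * (b - S) ^ γ) ≤ F S) :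
    0 ≤ F b := by
  have := right_nhdsWithin_Ioo_neBot hab
  have hlim : Tendsto (fun S => -(C * (b - S) ^ γ)) (𝓝[Ioo a b] b) (𝓝 0) := by
    have hcont : ContinuousAt (fun S => -(C * (b - S) ^ γ)) b := by
      fun_prop (disch := positivity)
    simpa [zero_rpow hγ.ne'] using hcont.tendsto.mono_left nhdsWithin_le_nhds
  exact le_of_tendsto_of_tendsto hlim hF (eventually_nhdsWithin_of_forall h)

theorem integral_sub_rpow_neg_mul_nonneg_of_max {f f' : ℝ → ℝ} {t₀ κ α β : ℝ} (hκ : κ ∈ Ico 0 t₀)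
    (hα : 0 ≤ α) (hαβ : α < β) (hβ : β ≤ 1) (hf' : IntervalIntegrable f' volume 0 t₀)
    (hf : ∀ t ∈ Icc 0 t₀, f t = f 0 + ∫ s in (0:ℝ)..t, f' s) (hmax : ∀ t ∈ Icc 0 t₀, f t ≤ f t₀)
    (hLp : MemLp f' (1 / ENNReal.ofReal (1 - β)) (volume.restrict (Ioc κ t₀))) :
    0 ≤ ∫ τ in (0:ℝ)..t₀, (t₀ - τ) ^ (-α) * f' τ := by
  obtain ⟨hκ0, hκt₀⟩ := hκ
  -- The integrand is in fact integrable (Hölder), but otherwise the integral would be `0` anyway.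
  by_cases hint : IntervalIntegrable (fun τ => (t₀ - τ) ^ (-α) * f' τ) volume 0 t₀
  swap
  · rw [intervalIntegral.integral_undef hint]
  set C := (eLpNorm f' (1 / ENNReal.ofReal (1 - β)) (volume.restrict (Ioc κ t₀))).toReal
  have hbound : ∀ S ∈ Ioo κ t₀,
      -(C * (t₀ - S) ^ (β - α)) ≤ ∫ τ in (0:ℝ)..S, (t₀ - τ) ^ (-α) * f' τ := by
    rintro S ⟨hκS, hSt₀⟩
    have hS0 : 0 ≤ S := hκ0.trans hκS.le
    have hpos : 0 < t₀ - S := sub_pos.2 hSt₀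
    have hf'S : IntervalIntegrable f' volume 0 S :=
      hf'.mono_set (uIcc_subset_uIcc left_mem_uIcc (mem_uIcc_of_le hS0 hSt₀.le))
    have hHolder : f t₀ - f S ≤ C * (t₀ - S) ^ β := by
      rw [hf t₀ ⟨hκ0.trans hκt₀.le, le_rfl⟩, hf S ⟨hS0, hSt₀.le⟩, add_sub_add_left_eq_sub,
        intervalIntegral.integral_interval_sub_left hf' hf'S]
      exact intervalIntegral_le_eLpNorm_mul_rpow_of_subset hκS.le hSt₀.le
        ⟨by linarith, hβ⟩ hLp
    have hIBP : (t₀ - S) ^ (-α) * (f S - f t₀) ≤ ∫ τ in (0:ℝ)..S, (t₀ - τ) ^ (-α) * f' τ :=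
      mul_sub_le_integral_mul_of_le hS0 (absolutelyContinuousOnInterval_sub_rpow hS0 hSt₀)
        (monotoneOn_sub_rpow_neg hα hSt₀) (rpow_nonneg (by linarith) _)
        hf'S (fun t ht => hf t ⟨ht.1, ht.2.trans hSt₀.le⟩)
        (fun t ht => hmax t ⟨ht.1, ht.2.trans hSt₀.le⟩)
    calc -(C * (t₀ - S) ^ (β - α)) = (t₀ - S) ^ (-α) * -(C * (t₀ - S) ^ β) := by
          rw [show β - α = -α + β by ring, rpow_add hpos]; ring
      _ ≤ (t₀ - S) ^ (-α) * (f S - f t₀) := by gcongr; linarith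
      _ ≤ _ := hIBP
  refine nonneg_of_neg_mul_rpow_le (F := fun S => ∫ τ in (0:ℝ)..S, (t₀ - τ) ^ (-α) * f' τ)
    hκt₀ (sub_pos.2 hαβ) ?_ hbound
  refine (intervalIntegral.continuousOn_primitive_interval' hint left_mem_uIcc t₀
    right_mem_uIcc).mono ?_
  rw [uIcc_of_le (hκ0.trans hκt₀.le)]
  exact Ioo_subset_Icc_self.trans (Icc_subset_Icc_left hκ0)

theorem caputo_nonneg {f' : ℝ → ℝ} {α t : ℝ} (hα : α < 1)
    (h : 0 ≤ ∫ τ in (0:ℝ)..t, (t - τ) ^ (-α) * f' τ) : 0 ≤ caputo f' α t :=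
  mul_nonneg (one_div_pos.2 (Gamma_pos_of_pos (sub_pos.2 hα))).le h

theorem caputo_extremum_principle_general (T : ℝ)
    (f f' : ℝ → ℝ)
    (hf'int : IntervalIntegrable f' volume 0 T)
    (hfAC : ∀ t ∈ Icc (0:ℝ) T, f t = f 0 + ∫ s in (0:ℝ)..t, f' s)
    (t₀ : ℝ) (ht₀ : t₀ ∈ Ioc (0:ℝ) T)
    (hmax : ∀ t ∈ Icc (0:ℝ) T, f t ≤ f t₀) :
    (∀ β : ℝ, β ∈ Ioc (0:ℝ) 1 →
      (∀ κ > (0:ℝ), MemLp f' (1 / ENNReal.ofReal (1 - β))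
        (volume.restrict (Ioo κ T))) →
      ∀ α ∈ Ioo (0:ℝ) β, 0 ≤ caputo f' α t₀) ∧
    ((∀ κ > (0:ℝ), ∃ M : ℝ, ∀ᵐ t ∂(volume.restrict (Ioo κ T)), |f' t| ≤ M) →
      (∀ α ∈ Ioo (0:ℝ) 1, 0 ≤ caputo f' α t₀) ∧
      (∀ μ : ℝ → ℝ, Measurable μ → (∀ α ∈ Icc (0:ℝ) 1, 0 ≤ μ α) →
        IntegrableOn μ (Ioo 0 1) →
        0 ≤ ∫ α in Ioo (0:ℝ) 1, caputo f' α t₀ * μ α)) := by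
  obtain ⟨ht₀0, ht₀T⟩ := ht₀
  have hIcc : Icc 0 t₀ ⊆ Icc 0 T := Icc_subset_Icc_right ht₀T
  have hf' : IntervalIntegrable f' volume 0 t₀ :=
    hf'int.mono_set (uIcc_subset_uIcc left_mem_uIcc (mem_uIcc_of_le ht₀0.le ht₀T))
  have hκ : t₀ / 2 ∈ Ico 0 t₀ := ⟨by positivity, by linarith⟩
  have hrestrict : volume.restrict (Ioc (t₀ / 2) t₀) ≤ volume.restrict (Ioo (t₀ / 2) T) := by
    rw [← Measure.restrict_congr_set Ioo_ae_eq_Ioc]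
    exact Measure.restrict_mono (Ioo_subset_Ioo_right ht₀T) le_rfl
  have part_i : ∀ β ∈ Ioc (0:ℝ) 1,
      MemLp f' (1 / ENNReal.ofReal (1 - β)) (volume.restrict (Ioo (t₀ / 2) T)) →
      ∀ α ∈ Ioo (0:ℝ) β, 0 ≤ caputo f' α t₀ := fun β hβ hLp α hα =>
    caputo_nonneg (hα.2.trans_le hβ.2) <| integral_sub_rpow_neg_mul_nonneg_of_max hκ hα.1.le
      hα.2 hβ.2 hf' (fun t ht => hfAC t (hIcc ht)) (fun t ht => hmax t (hIcc ht))
      (hLp.mono_measure hrestrict)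
  refine ⟨fun β hβ hLp => part_i β hβ (hLp _ (by positivity)), fun hbd => ?_⟩
  have part_ii : ∀ α ∈ Ioo (0:ℝ) 1, 0 ≤ caputo f' α t₀ := by
    refine part_i 1 ⟨one_pos, le_rfl⟩ ?_
    obtain ⟨M, hM⟩ := hbd (t₀ / 2) (by positivity)
    rw [sub_self, ENNReal.ofReal_zero, one_div, ENNReal.inv_zero]
    refine memLp_top_of_bound ?_ M hM
    exact hf'int.1.aestronglyMeasurable.mono_measure (Measure.restrict_mono
      (Ioo_subset_Ioc_self.trans (Ioc_subset_Ioc_left hκ.1)) le_rfl)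
  exact ⟨part_ii, fun μ _ hμ _ => setIntegral_nonneg measurableSet_Ioo fun α hα =>
    mul_nonneg (part_ii α hα) (hμ α (Ioo_subset_Icc_self hα))⟩

/-- extremum principle, Lemma `luchko`: if `f` is absolutely
continuous on `[0,T]` and attains its maximum at `t₀ ∈ (0,T]`, then
(i) if `f' ∈ L^{1/(1-β)}(κ,T)` for all `κ > 0`, then `(D^α f)(t₀) ≥ 0` for
`α ∈ (0,β)`; (ii) if `f' ∈ L^∞(κ,T)` for all `κ > 0`, then `(D^α f)(t₀) ≥ 0`
for all `α ∈ (0,1)` and `∫₀¹ (D^α f)(t₀) μ(α) dα ≥ 0` for nonnegative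
`μ ∈ L¹(0,1)`. -/
theorem caputo_extremum_principle (T : ℝ) (hT : 0 < T)
    (f f' : ℝ → ℝ)
    (hf'int : IntervalIntegrable f' volume 0 T)
    (hfAC : ∀ t ∈ Icc (0:ℝ) T, f t = f 0 + ∫ s in (0:ℝ)..t, f' s)
    (t₀ : ℝ) (ht₀ : t₀ ∈ Ioc (0:ℝ) T)
    (hmax : ∀ t ∈ Icc (0:ℝ) T, f t ≤ f t₀) :
    (∀ β : ℝ, β ∈ Ioc (0:ℝ) 1 →
      (∀ κ > (0:ℝ), MemLp f' (1 / ENNReal.ofReal (1 - β))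
        (volume.restrict (Ioo κ T))) →
      ∀ α ∈ Ioo (0:ℝ) β, 0 ≤ caputo f' α t₀) ∧
    ((∀ κ > (0:ℝ), ∃ M : ℝ, ∀ᵐ t ∂(volume.restrict (Ioo κ T)), |f' t| ≤ M) →
      (∀ α ∈ Ioo (0:ℝ) 1, 0 ≤ caputo f' α t₀) ∧
      (∀ μ : ℝ → ℝ, Measurable μ → (∀ α ∈ Icc (0:ℝ) 1, 0 ≤ μ α) →
        IntegrableOn μ (Ioo 0 1) →
        0 ≤ ∫ α in Ioo (0:ℝ) 1, caputo f' α t₀ * μ α)) :=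
  caputo_extremum_principle_general T f f' hf'int hfAC t₀ ht₀ hmax
end
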